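/- Let ψ_T, p_T, ψ, p ∈ (0,1), let K, N be positive integers, and set θ_T = 1 − (1−p_T)^K and θ = 1 − (1−p)^K. Let Y₁, …, Y_N be independent, identically distributed zero-inflated binomial (ZIB) random variables with parameters (ψ_T, K, p_T), let s_d be the number of indices i with Y_i ≥ 1 and d = ∑_{i=1}^N Y_i, and define S₁ = (s_d − ψθN)/(ψ(1 − ψθ)) and S₂ = (d − s_d·K·p)/(p(1−p)) − (N − s_d)·ψ·K·(1−θ)/((1 − ψθ)(1−p)). Then Cov(S₁, S₂) = E(S₁S₂) − E(S₁)E(S₂) = N·ψ_T·(1 − ψ_T·θ_T)·K·((p_T − p·θ_T)/(ψ(1 − ψθ)·p(1−p)) + (1−θ)·θ_T/((1 − ψθ)²(1−p))). -/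

import Mathlib

/-! The ZIB law is the mixture `(1 - ψ) δ₀ + ψ Bin(K, p)`, so its moments are read off the
Bernstein polynomials. Both scores are affine in the additive statistics `s_d = ∑ᵢ 1[Yᵢ ≥ 1]` and
`d = ∑ᵢ Yᵢ`: `S₁ = (s_d - ψθN) / A` with `A = ψ(1 - ψθ)`, and `S₂ = a s_d + d / (p(1 - p)) + c`.
Covariance is bilinear and blind to constants, so
`Cov(S₁, S₂) = (a Var s_d + Cov(d, s_d) / (p(1 - p))) / A`. Independence of the sites makes each
covariance `N` times the single-site one, and there `1[Y ≥ 1]² = 1[Y ≥ 1]` and `Y · 1[Y ≥ 1] = Y`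
give `Var = ψ_Tθ_T(1 - ψ_Tθ_T)` and `Cov = ψ_T K p_T (1 - ψ_Tθ_T)`. -/

/-- The probability mass function of the zero-inflated binomial distribution with
parameters `ψ`, `K`, `p`, for values `y = 0, 1, …, K`. -/
def zibPmf (ψ p : ℝ) (K : ℕ) (y : ℕ) : ℝ :=
  if y = 0 then 1 - ψ + ψ * (1 - p) ^ K
  else ψ * (K.choose y : ℝ) * p ^ y * (1 - p) ^ (K - y)

/-- Joint pmf of `N` i.i.d. zero-inflated binomial observations, each taking values in
`{0, 1, …, K}` (encoded as `Fin (K+1)`). -/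
def zibJoint (ψ p : ℝ) (K N : ℕ) (ω : Fin N → Fin (K + 1)) : ℝ :=
  ∏ i, zibPmf ψ p K (ω i)

/-- Expectation of a statistic `f` of `N` i.i.d. ZIB`(ψ, K, p)` observations. -/
def zibExp (ψ p : ℝ) (K N : ℕ) (f : (Fin N → Fin (K + 1)) → ℝ) : ℝ :=
  ∑ ω : Fin N → Fin (K + 1), zibJoint ψ p K N ω * f ω

/-- The total number of detections `d = ∑ᵢ Yᵢ`. -/
def dTot {K N : ℕ} (ω : Fin N → Fin (K + 1)) : ℝ :=
  ∑ i, ((ω i : ℕ) : ℝ)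

/-- The number of sites with at least one detection, `s_d = #{i : Yᵢ ≥ 1}`. -/
def sDet {K N : ℕ} (ω : Fin N → Fin (K + 1)) : ℝ :=
  ((Finset.univ.filter fun i => (ω i : ℕ) ≠ 0).card : ℝ)

open Finset

section WeightedCovariance

variable {Ω : Type*} [Fintype Ω]

def weightedCov (P U V : Ω → ℝ) : ℝ :=
  ∑ ω, P ω * (U ω * V ω) - (∑ ω, P ω * U ω) * ∑ ω, P ω * V ω

theorem weightedCov_comm (P U V : Ω → ℝ) : weightedCov P U V = weightedCov P V U := by
  simp only [weightedCov, mul_comm (U _)]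
  ring

theorem weightedCov_linear_left {P : Ω → ℝ} (hP : ∑ ω, P ω = 1) (U V W : Ω → ℝ) (a b c : ℝ) :
    weightedCov P (fun ω => a * U ω + b * V ω + c) W =
      a * weightedCov P U W + b * weightedCov P V W := by
  have hE : ∀ F : Ω → ℝ, ∑ ω, P ω * (a * U ω + b * V ω + c) * F ω =
      a * ∑ ω, P ω * (U ω * F ω) + b * ∑ ω, P ω * (V ω * F ω) + c * ∑ ω, P ω * F ω := by
    intro F
    simp only [mul_sum, ← sum_add_distrib]
    exact sum_congr rfl fun _ _ => by ring
  have hW := hE W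
  have h1 := hE 1
  simp only [Pi.one_apply, mul_one, hP] at h1
  simp only [weightedCov, ← mul_assoc, hW, h1]
  ring

theorem weightedCov_affine_left {P : Ω → ℝ} (hP : ∑ ω, P ω = 1) (U W : Ω → ℝ) (a c : ℝ) :
    weightedCov P (fun ω => a * U ω + c) W = a * weightedCov P U W := by
  simpa using weightedCov_linear_left hP U U W a 0 c

theorem weightedCov_sum_sum {ι κ : Type*} (s : Finset ι) (t : Finset κ) (P : Ω → ℝ)
    (F : ι → Ω → ℝ) (G : κ → Ω → ℝ) :
    weightedCov P (fun ω => ∑ i ∈ s, F i ω) (fun ω => ∑ j ∈ t, G j ω) =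
      ∑ i ∈ s, ∑ j ∈ t, weightedCov P (F i) (G j) := by
  have hF : ∑ ω, P ω * ∑ i ∈ s, F i ω = ∑ i ∈ s, ∑ ω, P ω * F i ω := by
    simp only [mul_sum]; exact sum_comm
  have hG : ∑ ω, P ω * ∑ j ∈ t, G j ω = ∑ j ∈ t, ∑ ω, P ω * G j ω := by
    simp only [mul_sum]; exact sum_comm
  have hFG : ∑ ω, P ω * ((∑ i ∈ s, F i ω) * ∑ j ∈ t, G j ω) =
      ∑ i ∈ s, ∑ j ∈ t, ∑ ω, P ω * (F i ω * G j ω) := by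
    simp only [sum_mul_sum s t, mul_sum]
    rw [sum_comm]
    exact sum_congr rfl fun _ _ => sum_comm
  rw [weightedCov, hFG, hF, hG, sum_mul_sum]
  simp only [weightedCov, ← sum_sub_distrib]

end WeightedCovariance

section ProductWeights

variable {ι α : Type*} [Fintype ι] [DecidableEq ι] [Fintype α] {q : α → ℝ}

theorem sum_prod_mul_prod (q : α → ℝ) (u : ι → α → ℝ) :
    ∑ ω : ι → α, (∏ i, q (ω i)) * ∏ i, u i (ω i) = ∏ i, ∑ y, q y * u i y := by
  rw [Fintype.prod_sum]
  exact sum_congr rfl fun _ _ => prod_mul_distrib.symm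

theorem sum_prod_mul_apply (hq : ∑ y, q y = 1) (f : α → ℝ) (i : ι) :
    ∑ ω : ι → α, (∏ k, q (ω k)) * f (ω i) = ∑ y, q y * f y := by
  have hu : ∀ k, ∑ y, q y * (if k = i then f y else 1) =
      if k = i then ∑ y, q y * f y else 1 := by
    intro k; split_ifs <;> simp [hq]
  have h := sum_prod_mul_prod q fun k y => if k = i then f y else 1
  simpa only [hu, prod_ite_eq', mem_univ, if_true] using h

theorem sum_prod_mul_apply_mul_apply_of_ne (hq : ∑ y, q y = 1) (f g : α → ℝ) {i j : ι}
    (hij : i ≠ j) :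
    ∑ ω : ι → α, (∏ k, q (ω k)) * (f (ω i) * g (ω j)) = (∑ y, q y * f y) * ∑ y, q y * g y := by
  have hu : ∀ k, ∑ y, q y * ((if k = i then f y else 1) * (if k = j then g y else 1)) =
      (if k = i then ∑ y, q y * f y else 1) * (if k = j then ∑ y, q y * g y else 1) := by
    intro k
    by_cases hi : k = i
    · subst hi; simp [hij]
    · by_cases hj : k = j
      · subst hj; simp [hi]
      · simp [hi, hj, hq]
  have h :=
    sum_prod_mul_prod q fun k y => (if k = i then f y else 1) * (if k = j then g y else 1)
  simpa only [hu, prod_mul_distrib, prod_ite_eq', mem_univ, if_true] using h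

theorem sum_prod_eq_one (hq : ∑ y, q y = 1) : ∑ ω : ι → α, ∏ i, q (ω i) = 1 := by
  rw [← Fintype.prod_sum]
  simp [hq]

theorem weightedCov_prod_apply_apply (hq : ∑ y, q y = 1) (f g : α → ℝ) (i j : ι) :
    weightedCov (fun ω : ι → α => ∏ k, q (ω k)) (fun ω => f (ω i)) (fun ω => g (ω j)) =
      if i = j then weightedCov q f g else 0 := by
  unfold weightedCov
  rw [sum_prod_mul_apply hq, sum_prod_mul_apply hq]
  split_ifs with hij
  · subst hij
    rw [sum_prod_mul_apply hq fun y => f y * g y]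
  · rw [sum_prod_mul_apply_mul_apply_of_ne hq f g hij, sub_self]

theorem weightedCov_prod_sum_apply (hq : ∑ y, q y = 1) (f g : α → ℝ) :
    weightedCov (fun ω : ι → α => ∏ k, q (ω k)) (fun ω => ∑ i, f (ω i))
        (fun ω => ∑ i, g (ω i)) =
      Fintype.card ι * weightedCov q f g := by
  rw [weightedCov_sum_sum]
  simp only [weightedCov_prod_apply_apply hq, sum_ite_eq, mem_univ, if_true, sum_const,
    card_univ, nsmul_eq_mul]

end ProductWeights

section Statistics

variable {K N : ℕ}

def detIndicator (y : Fin (K + 1)) : ℝ := if (y : ℕ) = 0 then 0 else 1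

theorem detIndicator_mul_self (y : Fin (K + 1)) :
    detIndicator y * detIndicator y = detIndicator y := by
  unfold detIndicator; split_ifs <;> simp

theorem val_mul_detIndicator (y : Fin (K + 1)) : ((y : ℕ) : ℝ) * detIndicator y = (y : ℕ) := by
  unfold detIndicator; split_ifs with h <;> simp [h]

theorem sDet_eq_sum_detIndicator :
    (sDet : (Fin N → Fin (K + 1)) → ℝ) = fun ω => ∑ i, detIndicator (ω i) := by
  ext ω
  rw [sDet, card_filter, Nat.cast_sum]
  simp [detIndicator]

theorem zibExp_mul_sub_mul {ψ p : ℝ} (U V : (Fin N → Fin (K + 1)) → ℝ) :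
    zibExp ψ p K N (fun ω => U ω * V ω) - zibExp ψ p K N U * zibExp ψ p K N V =
      weightedCov (zibJoint ψ p K N) U V :=
  rfl

end Statistics

section ZeroInflatedBinomial

open Polynomial

variable (ψ p : ℝ) (K : ℕ)

theorem zibPmf_eq_mixture (y : ℕ) :
    zibPmf ψ p K y =
      (1 - ψ) * (if y = 0 then 1 else 0) + ψ * (bernsteinPolynomial ℝ K y).eval p := by
  rcases eq_or_ne y 0 with rfl | hy
  · simp [zibPmf, bernsteinPolynomial]
  · simp [zibPmf, bernsteinPolynomial, hy]; ring

theorem sum_zibPmf_mul (f : ℕ → ℝ) :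
    ∑ y : Fin (K + 1), zibPmf ψ p K y * f y =
      (1 - ψ) * f 0 + ψ * ∑ y ∈ range (K + 1), (bernsteinPolynomial ℝ K y).eval p * f y := by
  rw [Fin.sum_univ_eq_sum_range (fun y => zibPmf ψ p K y * f y)]
  simp [zibPmf_eq_mixture, add_mul, sum_add_distrib, mul_sum, mul_assoc]

theorem sum_zibPmf : ∑ y : Fin (K + 1), zibPmf ψ p K y = 1 := by
  have h : ∑ y ∈ range (K + 1), (bernsteinPolynomial ℝ K y).eval p = 1 := by
    simpa [eval_finsetSum] using congrArg (eval p) (bernsteinPolynomial.sum ℝ K)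
  simpa [h] using sum_zibPmf_mul ψ p K 1

theorem sum_zibJoint (N : ℕ) : ∑ ω, zibJoint ψ p K N ω = 1 :=
  sum_prod_eq_one (sum_zibPmf ψ p K)

theorem sum_zibPmf_mul_self : ∑ y : Fin (K + 1), zibPmf ψ p K y * (y : ℕ) = ψ * K * p := by
  have h : ∑ y ∈ range (K + 1), (bernsteinPolynomial ℝ K y).eval p * y = K * p := by
    simpa [eval_finsetSum, mul_comm] using congrArg (eval p) (bernsteinPolynomial.sum_smul ℝ K)
  simpa [h, mul_assoc] using sum_zibPmf_mul ψ p K (fun y => y)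

theorem sum_zibPmf_mul_detIndicator :
    ∑ y : Fin (K + 1), zibPmf ψ p K y * detIndicator y = ψ * (1 - (1 - p) ^ K) := by
  have h := sum_zibPmf ψ p K
  rw [Fin.sum_univ_succ] at h ⊢
  simp only [detIndicator, Fin.val_zero, Fin.val_succ, if_true, Nat.succ_ne_zero, if_false,
    mul_zero, mul_one, zero_add] at h ⊢
  have h0 : zibPmf ψ p K 0 = 1 - ψ + ψ * (1 - p) ^ K := if_pos rfl
  linarith

theorem zibCov_sDet_sDet (N : ℕ) :
    weightedCov (zibJoint ψ p K N) sDet sDet =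
      N * (ψ * (1 - (1 - p) ^ K) * (1 - ψ * (1 - (1 - p) ^ K))) := by
  rw [sDet_eq_sum_detIndicator]
  refine (weightedCov_prod_sum_apply (sum_zibPmf ψ p K) _ _).trans ?_
  simp only [Fintype.card_fin, weightedCov, detIndicator_mul_self, sum_zibPmf_mul_detIndicator]
  ring

theorem zibCov_dTot_sDet (N : ℕ) :
    weightedCov (zibJoint ψ p K N) dTot sDet = N * (ψ * K * p * (1 - ψ * (1 - (1 - p) ^ K))) := by
  rw [sDet_eq_sum_detIndicator]
  refine (weightedCov_prod_sum_apply (sum_zibPmf ψ p K) (fun y => ((y : ℕ) : ℝ)) _).trans ?_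
  simp only [Fintype.card_fin, weightedCov, val_mul_detIndicator, sum_zibPmf_mul_detIndicator,
    sum_zibPmf_mul_self]
  ring

end ZeroInflatedBinomial

theorem zib_score_S1_S2_covariance_general (ψT pT ψ p : ℝ)
    (hψ0 : 0 < ψ) (hψ1 : ψ < 1) (hp0 : 0 < p) (hp1 : p < 1)
    (K N : ℕ) :
    zibExp ψT pT K N (fun ω =>
          ((sDet ω - ψ * (1 - (1 - p) ^ K) * (N : ℝ)) /
              (ψ * (1 - ψ * (1 - (1 - p) ^ K)))) *
            ((dTot ω - sDet ω * (K : ℝ) * p) / (p * (1 - p)) -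
              ((N : ℝ) - sDet ω) * ψ * (K : ℝ) * (1 - (1 - (1 - p) ^ K)) /
                ((1 - ψ * (1 - (1 - p) ^ K)) * (1 - p)))) -
        zibExp ψT pT K N (fun ω =>
            (sDet ω - ψ * (1 - (1 - p) ^ K) * (N : ℝ)) /
              (ψ * (1 - ψ * (1 - (1 - p) ^ K)))) *
          zibExp ψT pT K N (fun ω =>
            (dTot ω - sDet ω * (K : ℝ) * p) / (p * (1 - p)) -
              ((N : ℝ) - sDet ω) * ψ * (K : ℝ) * (1 - (1 - (1 - p) ^ K)) /
                ((1 - ψ * (1 - (1 - p) ^ K)) * (1 - p))) =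
      (N : ℝ) * ψT * (1 - ψT * (1 - (1 - pT) ^ K)) * (K : ℝ) *
        ((pT - p * (1 - (1 - pT) ^ K)) /
            (ψ * (1 - ψ * (1 - (1 - p) ^ K)) * p * (1 - p)) +
          (1 - (1 - (1 - p) ^ K)) * (1 - (1 - pT) ^ K) /
            ((1 - ψ * (1 - (1 - p) ^ K)) ^ 2 * (1 - p))) := by
  set θ := 1 - (1 - p) ^ K
  have hθ : θ ≤ 1 := by have := pow_nonneg (sub_nonneg.2 hp1.le) K; linarith
  have hψθ : 1 - ψ * θ ≠ 0 := by nlinarith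
  have h1p : 1 - p ≠ 0 := by linarith
  have hS₁ : (fun ω : Fin N → Fin (K + 1) => (sDet ω - ψ * θ * N) / (ψ * (1 - ψ * θ))) =
      fun ω => 1 / (ψ * (1 - ψ * θ)) * sDet ω + -(ψ * θ * N / (ψ * (1 - ψ * θ))) :=
    funext fun ω => by ring
  have hS₂ : (fun ω : Fin N → Fin (K + 1) => (dTot ω - sDet ω * K * p) / (p * (1 - p)) -
        (N - sDet ω) * ψ * K * (1 - θ) / ((1 - ψ * θ) * (1 - p))) =
      fun ω => (ψ * K * (1 - θ) / ((1 - ψ * θ) * (1 - p)) - K * p / (p * (1 - p))) * sDet ω +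
        1 / (p * (1 - p)) * dTot ω + -(N * ψ * K * (1 - θ) / ((1 - ψ * θ) * (1 - p))) :=
    funext fun ω => by ring
  have hP := sum_zibJoint ψT pT K N
  rw [zibExp_mul_sub_mul, hS₁, hS₂, weightedCov_affine_left hP, weightedCov_comm,
    weightedCov_linear_left hP, zibCov_sDet_sDet, zibCov_dTot_sDet]
  field_simp
  ring

/-- With data `Y₁, …, Y_N` i.i.d. ZIB`(ψ_T, K, p_T)`,
`θ_T = 1 − (1−p_T)^K`, `θ = 1 − (1−p)^K`, and score components
`S₁ = (s_d − ψθN)/(ψ(1 − ψθ))` and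
`S₂ = (d − s_d K p)/(p(1−p)) − (N − s_d) ψ K (1−θ)/((1 − ψθ)(1−p))`, one has
`Cov(S₁, S₂) = E(S₁S₂) − E(S₁)E(S₂)
  = N ψ_T (1 − ψ_T θ_T) K ((p_T − p θ_T)/(ψ(1 − ψθ) p(1−p)) + (1−θ)θ_T/((1 − ψθ)²(1−p)))`. -/
theorem zib_score_S1_S2_covariance (ψT pT ψ p : ℝ)
    (hψT0 : 0 < ψT) (hψT1 : ψT < 1) (hpT0 : 0 < pT) (hpT1 : pT < 1)
    (hψ0 : 0 < ψ) (hψ1 : ψ < 1) (hp0 : 0 < p) (hp1 : p < 1)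
    (K N : ℕ) (hK : 0 < K) (hN : 0 < N) :
    zibExp ψT pT K N (fun ω =>
          ((sDet ω - ψ * (1 - (1 - p) ^ K) * (N : ℝ)) /
              (ψ * (1 - ψ * (1 - (1 - p) ^ K)))) *
            ((dTot ω - sDet ω * (K : ℝ) * p) / (p * (1 - p)) -
              ((N : ℝ) - sDet ω) * ψ * (K : ℝ) * (1 - (1 - (1 - p) ^ K)) /
                ((1 - ψ * (1 - (1 - p) ^ K)) * (1 - p)))) -
        zibExp ψT pT K N (fun ω =>
            (sDet ω - ψ * (1 - (1 - p) ^ K) * (N : ℝ)) /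
              (ψ * (1 - ψ * (1 - (1 - p) ^ K)))) *
          zibExp ψT pT K N (fun ω =>
            (dTot ω - sDet ω * (K : ℝ) * p) / (p * (1 - p)) -
              ((N : ℝ) - sDet ω) * ψ * (K : ℝ) * (1 - (1 - (1 - p) ^ K)) /
                ((1 - ψ * (1 - (1 - p) ^ K)) * (1 - p))) =
      (N : ℝ) * ψT * (1 - ψT * (1 - (1 - pT) ^ K)) * (K : ℝ) *
        ((pT - p * (1 - (1 - pT) ^ K)) /
            (ψ * (1 - ψ * (1 - (1 - p) ^ K)) * p * (1 - p)) +
          (1 - (1 - (1 - p) ^ K)) * (1 - (1 - pT) ^ K) /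
            ((1 - ψ * (1 - (1 - p) ^ K)) ^ 2 * (1 - p))) :=
  zib_score_S1_S2_covariance_general ψT pT ψ p hψ0 hψ1 hp0 hp1 K N
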